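/- arXiv:1310.6869 — 2 statements merged into one kernel-verified Lean document; each statement's English description precedes it below -/
import Mathlib

section
/- The series Σ_{k₁≠0, k₂≠0 in ℤ³} 1/( |k₁|² |k₂|² (|k₁|² + |k₂|² + |k₁+k₂|²) ) diverges (equals +∞). -/
open scoped ENNReal NNReal BigOperators
open MeasureTheory

noncomputable section

/-- Fourier coefficient representation of a periodic distribution on the torus `𝕋^d`. -/
abbrev Coef (d : ℕ) := (Fin d → ℤ) → ℂ

/-- Euclidean norm of a lattice point. -/
def knorm {d : ℕ} (k : Fin d → ℤ) : ℝ := Real.sqrt (∑ i, ((k i : ℝ)) ^ 2)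

/-- The function on the torus with Fourier coefficients `c`. -/
def toFun {d : ℕ} (c : Coef d) : (Fin d → ℝ) → ℂ :=
  fun x => ∑' k : Fin d → ℤ, c k * Complex.exp (Complex.I * (∑ i, (k i : ℝ) * x i))

/-- `L^∞` norm. -/
def linf {d : ℕ} (c : Coef d) : ℝ≥0∞ := ⨆ x : Fin d → ℝ, (‖toFun c x‖₊ : ℝ≥0∞)

/-- Littlewood–Paley multiplier: `n = 0` corresponds to the block `Δ_{-1}` (multiplier `χ`),
and `n = j + 1` to `Δ_j`, `j ≥ 0` (multiplier `θ(2^{-j}·)`). -/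
def lpMult (χ θ : ℝ → ℝ) (n : ℕ) (r : ℝ) : ℝ :=
  if n = 0 then χ r else θ ((2 : ℝ) ^ (-((n : ℝ) - 1)) * r)

/-- Littlewood–Paley block `Δ_{n-1}`. -/
def block {d : ℕ} (χ θ : ℝ → ℝ) (n : ℕ) (c : Coef d) : Coef d :=
  fun k => (lpMult χ θ n (knorm k) : ℂ) * c k

/-- Besov–Hölder norm `‖·‖_{C^α} = ‖·‖_{B^α_{∞,∞}}`. -/
def hnorm {d : ℕ} (χ θ : ℝ → ℝ) (α : ℝ) (c : Coef d) : ℝ≥0∞ :=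
  ⨆ n : ℕ, ENNReal.ofReal ((2 : ℝ) ^ (((n : ℝ) - 1) * α)) * linf (block χ θ n c)

/-- Convolution of coefficients, i.e. the coefficients of the product of the two functions. -/
def conv {d : ℕ} (a b : Coef d) : Coef d := fun k => ∑' m : Fin d → ℤ, a m * b (k - m)

/-- `S_{j-1} u = Σ_{i < j-1} Δ_i u` (with `n = j + 1`). -/
def lowSum {d : ℕ} (χ θ : ℝ → ℝ) (n : ℕ) (c : Coef d) : Coef d :=
  fun k => ∑ m ∈ Finset.range (n - 1), block χ θ m c k

/-- Bony paraproduct `π_<(u,v) = Σ_j S_{j-1} u Δ_j v`. -/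
def paraLT {d : ℕ} (χ θ : ℝ → ℝ) (u v : Coef d) : Coef d :=
  fun k => ∑' n : ℕ, conv (lowSum χ θ n u) (block χ θ n v) k

/-- Resonant term `π_0(u,v) = Σ_j Σ_{|i-j|≤1} Δ_i u Δ_j v`. -/
def resonant {d : ℕ} (χ θ : ℝ → ℝ) (u v : Coef d) : Coef d :=
  fun k => ∑' n : ℕ, ∑ m ∈ Finset.Icc (n - 1) (n + 1), conv (block χ θ m u) (block χ θ n v) k

/-- Heat semigroup `P_t = e^{tΔ}` on the torus. -/
def heat {d : ℕ} (t : ℝ) (c : Coef d) : Coef d :=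
  fun k => (Real.exp (-t * knorm k ^ 2) : ℂ) * c k

/-- `(χ, θ)` is a (radial) Littlewood–Paley pair: smooth, nonnegative, `χ` supported in a ball,
`θ` supported in an annulus, and `χ(ξ) + Σ_{j≥0} θ(2^{-j}ξ) = 1`. -/
structure IsLPPair (χ θ : ℝ → ℝ) : Prop where
  chi_nonneg : ∀ r, 0 ≤ χ r
  theta_nonneg : ∀ r, 0 ≤ θ r
  chi_smooth : ContDiff ℝ (⊤ : ℕ∞) χ
  theta_smooth : ContDiff ℝ (⊤ : ℕ∞) θ
  chi_ball : ∃ R > 0, ∀ r : ℝ, R < |r| → χ r = 0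
  theta_annulus : ∃ a b : ℝ, 0 < a ∧ a < b ∧ ∀ r : ℝ, (|r| < a ∨ b < |r|) → θ r = 0
  partition : ∀ r : ℝ, χ r + ∑' j : ℕ, θ ((2 : ℝ) ^ (-(j : ℝ)) * r) = 1

lemma knorm_sq_eq {d : ℕ} (k : Fin d → ℤ) : knorm k ^ 2 = ∑ i, ((k i : ℝ)) ^ 2 := by
  rw [knorm, Real.sq_sqrt]; positivity

def shellPt (n : ℕ) (a : Fin 3 → Fin (2 ^ n)) : {k : Fin 3 → ℤ // k ≠ 0} :=
  ⟨fun i => 2 ^ n + ((a i : ℕ) : ℤ), fun h => by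
    have h0 := congrFun h 0
    simp only [Pi.zero_apply] at h0
    have h1 : (0:ℤ) ≤ ((a 0 : ℕ) : ℤ) := Int.natCast_nonneg _
    have h2 : (0:ℤ) < 2 ^ n := by positivity
    omega⟩

lemma sum_sq_le (c : Fin 3 → ℝ) (M : ℝ) (h : ∀ i, 0 ≤ c i) (h2 : ∀ i, c i ≤ M) :
    ∑ i, c i ^ 2 ≤ 3 * M ^ 2 := by
  calc ∑ i, c i ^ 2 ≤ ∑ _i : Fin 3, M ^ 2 :=
        Finset.sum_le_sum fun i _ => pow_le_pow_left₀ (h i) (h2 i) 2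
    _ = 3 * M ^ 2 := by simp [Finset.sum_const]

lemma shell_exp_eq (n m : ℕ) (a b : ℤ) (ha : 0 ≤ a) (ha' : a < 2^n) (hb : 0 ≤ b) (hb' : b < 2^m)
    (h : (2:ℤ)^n + a = 2^m + b) : n = m := by
  rcases lt_trichotomy n m with hc | hc | hc
  · exfalso
    have h3 : (2:ℤ)^(n+1) ≤ 2^m := pow_le_pow_right₀ (by norm_num) hc
    have : (2:ℤ)^n + 2^n ≤ 2^m := by rw [← two_mul]; linarith [pow_succ (2:ℤ) n]
    omega
  · exact hc
  · exfalso
    have h3 : (2:ℤ)^(m+1) ≤ 2^n := pow_le_pow_right₀ (by norm_num) hc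
    have : (2:ℤ)^m + 2^m ≤ 2^n := by rw [← two_mul]; linarith [pow_succ (2:ℤ) m]
    omega

/-- Lower bound on knorm² of a shell point. -/
lemma shellPt_knorm_lb (n : ℕ) (a : Fin 3 → Fin (2 ^ n)) :
    (4:ℝ)^n ≤ knorm (shellPt n a : Fin 3 → ℤ) ^ 2 := by
  rw [knorm_sq_eq]
  have h0 : ((4:ℝ))^n ≤ (((shellPt n a : Fin 3 → ℤ) 0 : ℝ)) ^ 2 := by
    have : ((2:ℝ))^n ≤ ((shellPt n a : Fin 3 → ℤ) 0 : ℝ) := by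
      simp only [shellPt]
      have h0 : (0:ℝ) ≤ ((a 0 : ℕ) : ℝ) := by positivity
      push_cast
      linarith
    calc (4:ℝ)^n = ((2:ℝ)^n)^2 := by rw [← pow_mul, mul_comm, pow_mul]; norm_num
      _ ≤ _ := pow_le_pow_left₀ (by positivity) this 2
  calc (4:ℝ)^n ≤ (((shellPt n a : Fin 3 → ℤ) 0 : ℝ)) ^ 2 := h0
    _ ≤ ∑ i, (((shellPt n a : Fin 3 → ℤ) i : ℝ)) ^ 2 :=
        Finset.single_le_sum (f := fun i => (((shellPt n a : Fin 3 → ℤ) i : ℝ))^2)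
          (fun i _ => by positivity) (Finset.mem_univ 0)

lemma shellPt_knorm_ub (n : ℕ) (a : Fin 3 → Fin (2 ^ n)) :
    knorm (shellPt n a : Fin 3 → ℤ) ^ 2 ≤ 12 * (4:ℝ)^n := by
  rw [knorm_sq_eq]
  have := sum_sq_le (fun i => (((shellPt n a : Fin 3 → ℤ) i : ℝ))) (2 * 2^n)
    (fun i => by simp only [shellPt]; push_cast; positivity)
    (fun i => by
      simp only [shellPt]
      have : ((a i : ℕ) : ℝ) ≤ 2^n := by
        have := (a i).isLt; exact_mod_cast le_of_lt this
      push_cast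
      linarith)
  calc ∑ i, (((shellPt n a : Fin 3 → ℤ) i : ℝ)) ^ 2 ≤ 3 * (2 * 2^n)^2 := this
    _ = 12 * (4:ℝ)^n := by
        rw [mul_pow, show ((2:ℝ)^n)^2 = 4^n by rw [← pow_mul, mul_comm, pow_mul]; norm_num]; ring

lemma shellPt_sum_knorm_ub (n : ℕ) (a b : Fin 3 → Fin (2 ^ n)) :
    knorm ((shellPt n a : Fin 3 → ℤ) + (shellPt n b : Fin 3 → ℤ)) ^ 2 ≤ 48 * (4:ℝ)^n := by
  rw [knorm_sq_eq]
  have := sum_sq_le (fun i => ((((shellPt n a : Fin 3 → ℤ) + (shellPt n b : Fin 3 → ℤ)) i : ℝ))) (4 * 2^n)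
    (fun i => by simp only [shellPt, Pi.add_apply]; push_cast; positivity)
    (fun i => by
      simp only [shellPt, Pi.add_apply]
      have h1 : ((a i : ℕ) : ℝ) ≤ 2^n := by exact_mod_cast le_of_lt (a i).isLt
      have h2 : ((b i : ℕ) : ℝ) ≤ 2^n := by exact_mod_cast le_of_lt (b i).isLt
      push_cast
      linarith)
  calc ∑ i, ((((shellPt n a : Fin 3 → ℤ) + (shellPt n b : Fin 3 → ℤ)) i : ℝ)) ^ 2
      ≤ 3 * (4 * 2^n)^2 := this
    _ = 48 * (4:ℝ)^n := by
        rw [mul_pow, show ((2:ℝ)^n)^2 = 4^n by rw [← pow_mul, mul_comm, pow_mul]; norm_num]; ring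


/-- The series `Σ_{k₁,k₂≠0} 1/(|k₁|²|k₂|²(|k₁|²+|k₂|²+|k₁+k₂|²))` diverges. -/
theorem second_constant_diverges :
    ∑' p : {k : Fin 3 → ℤ // k ≠ 0} × {k : Fin 3 → ℤ // k ≠ 0},
      ENNReal.ofReal
        (1 / (knorm (p.1 : Fin 3 → ℤ) ^ 2 * knorm (p.2 : Fin 3 → ℤ) ^ 2 *
          (knorm (p.1 : Fin 3 → ℤ) ^ 2 + knorm (p.2 : Fin 3 → ℤ) ^ 2 +
            knorm ((p.1 : Fin 3 → ℤ) + (p.2 : Fin 3 → ℤ)) ^ 2))) = ⊤ := by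
  classical
  set I := {k : Fin 3 → ℤ // k ≠ 0}
  set F : I × I → ℝ≥0∞ := fun p =>
    ENNReal.ofReal
      (1 / (knorm (p.1 : Fin 3 → ℤ) ^ 2 * knorm (p.2 : Fin 3 → ℤ) ^ 2 *
        (knorm (p.1 : Fin 3 → ℤ) ^ 2 + knorm (p.2 : Fin 3 → ℤ) ^ 2 +
          knorm ((p.1 : Fin 3 → ℤ) + (p.2 : Fin 3 → ℤ)) ^ 2))) with hF
  -- the injection
  set ψ : (Σ n : ℕ, (Fin 3 → Fin (2^n)) × (Fin 3 → Fin (2^n))) → I × I :=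
    fun x => (shellPt x.1 x.2.1, shellPt x.1 x.2.2) with hψ
  have hinj : Function.Injective ψ := by
    rintro ⟨n, a, b⟩ ⟨m, a', b'⟩ h
    simp only [hψ, Prod.mk.injEq] at h
    obtain ⟨h1, h2⟩ := h
    have h1' := congrArg Subtype.val h1
    have h2' := congrArg Subtype.val h2
    have hnm : n = m := by
      have := congrFun h1' 0
      simp only [shellPt] at this
      exact shell_exp_eq n m _ _ (Int.natCast_nonneg _)
        (by exact_mod_cast (a 0).isLt) (Int.natCast_nonneg _)
        (by exact_mod_cast (a' 0).isLt) this
    subst hnm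
    have ha : a = a' := by
      funext i
      have := congrFun h1' i
      simp only [shellPt] at this
      have : ((a i : ℕ) : ℤ) = ((a' i : ℕ) : ℤ) := by omega
      exact Fin.ext (by exact_mod_cast this)
    have hb : b = b' := by
      funext i
      have := congrFun h2' i
      simp only [shellPt] at this
      have : ((b i : ℕ) : ℤ) = ((b' i : ℕ) : ℤ) := by omega
      exact Fin.ext (by exact_mod_cast this)
    simp [ha, hb]
  refine top_unique ?_
  have key : ∀ n : ℕ, ENNReal.ofReal (1/10368)
      ≤ ∑' q : (Fin 3 → Fin (2^n)) × (Fin 3 → Fin (2^n)), F (ψ ⟨n, q⟩) := by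
    intro n
    have hterm : ∀ q : (Fin 3 → Fin (2^n)) × (Fin 3 → Fin (2^n)),
        ENNReal.ofReal (1 / (10368 * (64:ℝ)^n)) ≤ F (ψ ⟨n, q⟩) := by
      rintro ⟨a, b⟩
      apply ENNReal.ofReal_le_ofReal
      set A := knorm (shellPt n a : Fin 3 → ℤ) ^ 2
      set B := knorm (shellPt n b : Fin 3 → ℤ) ^ 2
      set C := knorm ((shellPt n a : Fin 3 → ℤ) + (shellPt n b : Fin 3 → ℤ)) ^ 2
      have hA1 : (4:ℝ)^n ≤ A := shellPt_knorm_lb n a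
      have hA2 : A ≤ 12 * (4:ℝ)^n := shellPt_knorm_ub n a
      have hB1 : (4:ℝ)^n ≤ B := shellPt_knorm_lb n b
      have hB2 : B ≤ 12 * (4:ℝ)^n := shellPt_knorm_ub n b
      have hC1 : (0:ℝ) ≤ C := by positivity
      have hC2 : C ≤ 48 * (4:ℝ)^n := shellPt_sum_knorm_ub n a b
      have h4 : (0:ℝ) < (4:ℝ)^n := by positivity
      have hD : (0:ℝ) < A * B * (A + B + C) := by
        apply mul_pos (mul_pos (by linarith) (by linarith)); linarith
      have hE : A * B * (A + B + C) ≤ 10368 * (64:ℝ)^n := by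
        have h64 : (64:ℝ)^n = (4:ℝ)^n * (4:ℝ)^n * (4:ℝ)^n := by
          rw [← mul_pow, ← mul_pow]; norm_num
        rw [h64]
        have := mul_le_mul (mul_le_mul hA2 hB2 (by linarith) (by positivity))
          (show A + B + C ≤ 72 * (4:ℝ)^n by linarith)
          (by linarith) (by positivity)
        nlinarith [this]
      have := one_div_le_one_div_of_le hD hE
      exact le_trans (le_of_eq rfl) this
    calc ENNReal.ofReal (1/10368)
        = (((2^n)^3 * (2^n)^3 : ℕ) : ℝ≥0∞) * ENNReal.ofReal (1 / (10368 * (64:ℝ)^n)) := by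
          have hcast : (((2^n)^3 * (2^n)^3 : ℕ) : ℝ≥0∞) = ENNReal.ofReal ((64:ℝ)^n) := by
            have hnat : ((2:ℕ)^n)^3 * (2^n)^3 = 64^n := by
              rw [← pow_mul, ← pow_add, show (64:ℕ) = 2^6 by norm_num, ← pow_mul]
              congr 1
              ring
            rw [hnat]
            rw [ENNReal.ofReal_pow (by norm_num)]
            push_cast
            norm_num
          rw [hcast, ← ENNReal.ofReal_mul (by positivity)]
          congr 1
          field_simp
      _ = (Fintype.card ((Fin 3 → Fin (2^n)) × (Fin 3 → Fin (2^n))) : ℝ≥0∞)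
            * ENNReal.ofReal (1 / (10368 * (64:ℝ)^n)) := by
          congr 2
          simp [Fintype.card_prod, Fintype.card_fun]
      _ = ∑' _q : (Fin 3 → Fin (2^n)) × (Fin 3 → Fin (2^n)),
            ENNReal.ofReal (1 / (10368 * (64:ℝ)^n)) := by
          rw [tsum_fintype]
          simp [Finset.sum_const, nsmul_eq_mul]
      _ ≤ _ := ENNReal.tsum_le_tsum hterm
  calc (⊤:ℝ≥0∞) = ∑' _n : ℕ, ENNReal.ofReal (1/10368) := by
        exact (ENNReal.tsum_const_eq_top_of_ne_zero (by norm_num [ENNReal.ofReal_eq_zero])).symm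
    _ ≤ ∑' n : ℕ, ∑' q : (Fin 3 → Fin (2^n)) × (Fin 3 → Fin (2^n)), F (ψ ⟨n, q⟩) :=
        ENNReal.tsum_le_tsum key
    _ = ∑' x : (Σ n : ℕ, (Fin 3 → Fin (2^n)) × (Fin 3 → Fin (2^n))), F (ψ x) :=
        (ENNReal.tsum_sigma' (fun x => F (ψ x))).symm
    _ ≤ ∑' p : I × I, F p := ENNReal.tsum_comp_le_tsum_of_injective hinj F
end
end

section
/- For every ρ > 0 small enough and T > 0 there is a constant C such that for all k ∈ ℤ³ with k ≠ 0 and all t ∈ [0,T], Σ_{k₁+k₂+k₃ = k, kᵢ ≠ 0} (1/(|k₁|²|k₂|²|k₃|²)) ∫_0^t ∫_0^s e^{−(|k₁|²+|k₂|²+|k₃|²)(s−σ) − |k|²((t−s)+(t−σ))} dσ ds ≤ C |k|^{−4+4ρ}. -/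
open scoped ENNReal NNReal BigOperators
open MeasureTheory

noncomputable section

namespace ICB
abbrev L := Fin 3 → ℤ

lemma knorm_nonneg (m : L) : 0 ≤ knorm m := Real.sqrt_nonneg _

lemma knorm_sq (m : L) : knorm m ^ 2 = ∑ i, ((m i : ℝ)) ^ 2 :=
  Real.sq_sqrt (by positivity)

lemma knorm_neg (m : L) : knorm (-m) = knorm m := by
  unfold knorm; congr 1; apply Finset.sum_congr rfl; intro i _
  simp [Pi.neg_apply]

lemma one_le_knorm {m : L} (hm : m ≠ 0) : 1 ≤ knorm m := by
  obtain ⟨i, hi⟩ : ∃ i, m i ≠ 0 := by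
    by_contra h; push_neg at h; exact hm (funext fun i => h i)
  have h1 : (1:ℝ) ≤ ((m i : ℝ)) ^ 2 := by
    have : (1:ℝ) ≤ |(m i : ℝ)| := by exact_mod_cast Int.one_le_abs hi
    nlinarith [abs_nonneg ((m i : ℝ)), sq_abs ((m i:ℝ))]
  have h2 : (1:ℝ) ≤ ∑ j, ((m j : ℝ)) ^ 2 :=
    le_trans h1 (Finset.single_le_sum (f := fun j => ((m j:ℝ))^2)
      (fun j _ => sq_nonneg _) (Finset.mem_univ i))
  calc (1:ℝ) = Real.sqrt 1 := Real.sqrt_one.symm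
  _ ≤ knorm m := Real.sqrt_le_sqrt h2

lemma knorm_pos {m : L} (hm : m ≠ 0) : 0 < knorm m := lt_of_lt_of_le one_pos (one_le_knorm hm)

lemma knorm_triangle (a b : L) : knorm (a + b) ≤ knorm a + knorm b := by
  set SA := ∑ i, ((a i:ℝ))^2 with hSAdef
  set SB := ∑ i, ((b i:ℝ))^2 with hSBdef
  have hSA : 0 ≤ SA := by positivity
  have hSB : 0 ≤ SB := by positivity
  have hC : (∑ i, (a i:ℝ)*(b i:ℝ))^2 ≤ SA * SB :=
    Finset.sum_mul_sq_le_sq_mul_sq _ _ _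
  have hab : ∑ i, (a i:ℝ)*(b i:ℝ) ≤ Real.sqrt SA * Real.sqrt SB := by
    calc ∑ i, (a i:ℝ)*(b i:ℝ) ≤ |∑ i, (a i:ℝ)*(b i:ℝ)| := le_abs_self _
    _ = Real.sqrt ((∑ i, (a i:ℝ)*(b i:ℝ))^2) := (Real.sqrt_sq_eq_abs _).symm
    _ ≤ Real.sqrt (SA * SB) := Real.sqrt_le_sqrt hC
    _ = Real.sqrt SA * Real.sqrt SB := Real.sqrt_mul hSA _
  have expand : ∑ i, (((a+b) i : ℤ):ℝ)^2 = SA + 2*(∑ i, (a i:ℝ)*(b i:ℝ)) + SB := by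
    rw [hSAdef, hSBdef, Finset.mul_sum, ← Finset.sum_add_distrib, ← Finset.sum_add_distrib]
    apply Finset.sum_congr rfl; intro i _
    simp only [Pi.add_apply, Int.cast_add]; ring
  have h1 : ∑ i, (((a+b) i : ℤ):ℝ)^2 ≤ (Real.sqrt SA + Real.sqrt SB)^2 := by
    rw [expand]
    nlinarith [Real.sq_sqrt hSA, Real.sq_sqrt hSB, hab]
  calc knorm (a+b) = Real.sqrt (∑ i, (((a+b) i : ℤ):ℝ)^2) := rfl
  _ ≤ Real.sqrt ((Real.sqrt SA + Real.sqrt SB)^2) := Real.sqrt_le_sqrt h1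
  _ = knorm a + knorm b := by
      rw [Real.sqrt_sq (by positivity)]; rfl

lemma coord_le_knorm (m : L) (i : Fin 3) : |(m i : ℝ)| ≤ knorm m := by
  rw [← Real.sqrt_sq_eq_abs]
  exact Real.sqrt_le_sqrt (Finset.single_le_sum (f := fun j => ((m j:ℝ))^2)
    (fun j _ => sq_nonneg _) (Finset.mem_univ i))

end ICB

namespace ICB

/-- weight `|m|^{-a}` as an extended real. -/
def w (a : ℝ) (m : L) : ℝ≥0∞ := ENNReal.ofReal (knorm m ^ (-a))

/-- total sum of the weight. -/
def S (a : ℝ) : ℝ≥0∞ := ∑' m : L, w a m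

lemma w_zero {a : ℝ} (ha : a ≠ 0) : w a 0 = 0 := by
  unfold w knorm
  simp [Real.zero_rpow (neg_ne_zero.mpr ha)]

/-- bulk/tail exchange of exponents: `x^{-b} ≤ R^{q-b} x^{-q}` when `x ≤ R`, `b ≤ q`. -/
lemma rpow_bulk {x R b q : ℝ} (hx : 0 < x) (hxR : x ≤ R) (hbq : b ≤ q) :
    x ^ (-b) ≤ R ^ (q - b) * x ^ (-q) := by
  have h1 : x ^ (-b) = x ^ (q - b) * x ^ (-q) := by
    rw [← Real.rpow_add hx]; ring_nf
  rw [h1]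
  exact mul_le_mul_of_nonneg_right
    (Real.rpow_le_rpow hx.le hxR (sub_nonneg.mpr hbq))
    (Real.rpow_nonneg hx.le _)

/-- tail exchange: `x^{-a} ≤ R^{q-a} x^{-q}` when `R ≤ x`, `q ≤ a`, `0 < R`. -/
lemma rpow_tail {x R a q : ℝ} (hR : 0 < R) (hRx : R ≤ x) (hqa : q ≤ a) :
    x ^ (-a) ≤ R ^ (q - a) * x ^ (-q) := by
  have hx : 0 < x := lt_of_lt_of_le hR hRx
  have h1 : x ^ (-a) = x ^ (q - a) * x ^ (-q) := by
    rw [← Real.rpow_add hx]; ring_nf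
  rw [h1]
  exact mul_le_mul_of_nonneg_right
    (Real.rpow_le_rpow_of_nonpos hR hRx (sub_nonpos.mpr hqa))
    (Real.rpow_nonneg hx.le _)

/-- `(N/2)^{-c} ≤ 2 N^{-c}` for `0 ≤ c ≤ 1`, `0 < N`. -/
lemma half_rpow {N c : ℝ} (hN : 0 < N) (hc : 0 ≤ c) (hc1 : c ≤ 1) :
    (N / 2) ^ (-c) ≤ 2 * N ^ (-c) := by
  rw [Real.div_rpow hN.le (by norm_num), Real.rpow_neg (by norm_num : (0:ℝ) ≤ 2)]
  rw [div_inv_eq_mul]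
  have h2 : (2:ℝ) ^ c ≤ 2 := by
    calc (2:ℝ) ^ c ≤ (2:ℝ) ^ (1:ℝ) := Real.rpow_le_rpow_of_exponent_le (by norm_num) hc1
    _ = 2 := Real.rpow_one 2
  calc N ^ (-c) * 2 ^ c ≤ N ^ (-c) * 2 :=
        mul_le_mul_of_nonneg_left h2 (Real.rpow_nonneg hN.le _)
  _ = 2 * N ^ (-c) := mul_comm _ _

end ICB

namespace ICB

lemma sum1d {p : ℝ} (hp : 1 < p) :
    (∑' z : ℤ, ENNReal.ofReal ((1 + |(z:ℝ)|) ^ (-p))) ≠ ∞ := by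
  have hs : Summable (fun z : ℤ => |(z:ℝ)| ^ (-p)) := Real.summable_abs_int_rpow hp
  have hb : ∀ z : ℤ, ENNReal.ofReal ((1 + |(z:ℝ)|) ^ (-p))
      ≤ (if z = 0 then 1 else 0) + ENNReal.ofReal (|(z:ℝ)| ^ (-p)) := by
    intro z
    by_cases hz : z = 0
    · subst hz
      simp only [if_pos rfl]
      calc ENNReal.ofReal ((1 + |((0:ℤ):ℝ)|) ^ (-p)) = 1 := by norm_num
      _ ≤ _ := le_self_add
    · rw [if_neg hz, zero_add]
      apply ENNReal.ofReal_le_ofReal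
      apply Real.rpow_le_rpow_of_nonpos
      · have : z ≠ 0 := hz
        have : 1 ≤ |(z:ℝ)| := by exact_mod_cast Int.one_le_abs hz
        linarith
      · linarith [abs_nonneg (z:ℝ)]
      · linarith
  have hle : (∑' z : ℤ, ENNReal.ofReal ((1 + |(z:ℝ)|) ^ (-p)))
      ≤ 1 + ENNReal.ofReal (∑' z : ℤ, |(z:ℝ)| ^ (-p)) := by
    calc (∑' z : ℤ, ENNReal.ofReal ((1 + |(z:ℝ)|) ^ (-p)))
        ≤ ∑' z : ℤ, ((if z = 0 then 1 else 0) + ENNReal.ofReal (|(z:ℝ)| ^ (-p))) :=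
          ENNReal.tsum_le_tsum hb
      _ = (∑' z : ℤ, (if z = 0 then (1:ℝ≥0∞) else 0)) + ∑' z : ℤ, ENNReal.ofReal (|(z:ℝ)| ^ (-p)) :=
          ENNReal.tsum_add
      _ = 1 + ENNReal.ofReal (∑' z : ℤ, |(z:ℝ)| ^ (-p)) := by
          rw [show (∑' z : ℤ, if z = 0 then (1:ℝ≥0∞) else 0) = 1 from
              tsum_ite_eq (0:ℤ) (fun _ => (1:ℝ≥0∞)),
            ENNReal.ofReal_tsum_of_nonneg (fun z => Real.rpow_nonneg (abs_nonneg _) _) hs]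
  exact ne_top_of_le_ne_top
    (ENNReal.add_ne_top.mpr ⟨ENNReal.one_ne_top, ENNReal.ofReal_ne_top⟩) hle

end ICB

namespace ICB

def e3 : L ≃ ℤ × ℤ × ℤ where
  toFun m := (m 0, m 1, m 2)
  invFun q := ![q.1, q.2.1, q.2.2]
  left_inv m := by funext i; fin_cases i <;> rfl
  right_inv q := rfl

lemma tsum_coords (g : ℤ → ℝ≥0∞) :
    ∑' m : L, (g (m 0) * (g (m 1) * g (m 2)))
      = (∑' z : ℤ, g z) * ((∑' z : ℤ, g z) * (∑' z : ℤ, g z)) := by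
  have h1 : ∑' m : L, (g (m 0) * (g (m 1) * g (m 2)))
      = ∑' q : ℤ × ℤ × ℤ, g q.1 * (g q.2.1 * g q.2.2) :=
    Equiv.tsum_eq e3 (fun q : ℤ × ℤ × ℤ => g q.1 * (g q.2.1 * g q.2.2))
  rw [h1, ENNReal.tsum_prod']
  have h2 : ∀ a : ℤ, (∑' q : ℤ × ℤ, g a * (g q.1 * g q.2))
      = g a * ((∑' z : ℤ, g z) * (∑' z : ℤ, g z)) := by
    intro a
    rw [ENNReal.tsum_prod']
    calc ∑' (b : ℤ) (c : ℤ), g a * (g b * g c)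
        = ∑' b : ℤ, g a * (g b * (∑' z : ℤ, g z)) := by
          apply tsum_congr; intro b
          rw [ENNReal.tsum_mul_left, ENNReal.tsum_mul_left]
      _ = g a * ((∑' z : ℤ, g z) * (∑' z : ℤ, g z)) := by
          rw [ENNReal.tsum_mul_left]
          congr 1
          rw [← ENNReal.tsum_mul_right]
    
  calc ∑' (a : ℤ) (q : ℤ × ℤ), g a * (g q.1 * g q.2)
      = ∑' a : ℤ, g a * ((∑' z : ℤ, g z) * (∑' z : ℤ, g z)) := by
        apply tsum_congr; intro a; exact h2 a
    _ = _ := ENNReal.tsum_mul_right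

theorem Sfin {a : ℝ} (ha : 3 < a) : S a ≠ ∞ := by
  set p := a / 3 with hp
  have hp1 : 1 < p := by rw [hp]; linarith
  set g : ℤ → ℝ≥0∞ := fun z => ENNReal.ofReal ((1 + |(z:ℝ)|) ^ (-p)) with hg
  -- pointwise bound
  have key : ∀ m : L, w a m ≤ ENNReal.ofReal ((8:ℝ) ^ p) * (g (m 0) * (g (m 1) * g (m 2))) := by
    intro m
    by_cases hm : m = 0
    · subst hm; rw [w_zero (by linarith)]; exact zero_le
    · have hK1 : 1 ≤ knorm m := one_le_knorm hm
      have hK0 : 0 < knorm m := by linarith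
      -- real inequality
      have coord : ∀ i, 1 + |(m i : ℝ)| ≤ 2 * knorm m := by
        intro i
        have := coord_le_knorm m i
        linarith
      have hfac : ∀ i, (0:ℝ) ≤ 1 + |(m i:ℝ)| := by
        intro i; linarith [abs_nonneg ((m i:ℝ))]
      have hprod : (1 + |(m 0:ℝ)|) * ((1 + |(m 1:ℝ)|) * (1 + |(m 2:ℝ)|))
          ≤ 8 * knorm m ^ (3:ℕ) := by
        have h0 := coord 0; have h1 := coord 1; have h2 := coord 2
        have hstep : (1 + |(m 0:ℝ)|) * ((1 + |(m 1:ℝ)|) * (1 + |(m 2:ℝ)|))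
            ≤ (2*knorm m) * ((2*knorm m) * (2*knorm m)) := by
          apply mul_le_mul h0 _ (by positivity) (by positivity)
          apply mul_le_mul h1 h2 (hfac 2) (by positivity)
        calc (1 + |(m 0:ℝ)|) * ((1 + |(m 1:ℝ)|) * (1 + |(m 2:ℝ)|))
            ≤ (2*knorm m) * ((2*knorm m) * (2*knorm m)) := hstep
          _ = 8 * knorm m ^ (3:ℕ) := by ring
      set P := (1 + |(m 0:ℝ)|) * ((1 + |(m 1:ℝ)|) * (1 + |(m 2:ℝ)|)) with hP
      have hPpos : 0 < P := by positivity
      have hmain : knorm m ^ (-a) ≤ (8:ℝ) ^ p * ((1 + |(m 0:ℝ)|) ^ (-p) *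
          ((1 + |(m 1:ℝ)|) ^ (-p) * (1 + |(m 2:ℝ)|) ^ (-p))) := by
        have e1 : knorm m ^ (-a) = (knorm m ^ (3:ℕ)) ^ (-p) := by
          rw [← Real.rpow_natCast (knorm m) 3, ← Real.rpow_mul hK0.le]
          norm_num
          rw [hp]; ring_nf
        have e2 : (knorm m ^ (3:ℕ)) ^ (-p) ≤ (P / 8) ^ (-p) := by
          apply Real.rpow_le_rpow_of_nonpos (by positivity)
          · linarith
          · linarith
        have e3 : (P / 8) ^ (-p) = (8:ℝ) ^ p * P ^ (-p) := by
          rw [Real.div_rpow hPpos.le (by norm_num), Real.rpow_neg (by norm_num : (0:ℝ) ≤ 8),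
            div_inv_eq_mul]
          ring
        have e4 : P ^ (-p) = (1 + |(m 0:ℝ)|) ^ (-p) *
            ((1 + |(m 1:ℝ)|) ^ (-p) * (1 + |(m 2:ℝ)|) ^ (-p)) := by
          rw [hP, Real.mul_rpow (hfac 0) (by positivity), Real.mul_rpow (hfac 1) (hfac 2)]
        calc knorm m ^ (-a) = (knorm m ^ (3:ℕ)) ^ (-p) := e1
          _ ≤ (P / 8) ^ (-p) := e2
          _ = (8:ℝ) ^ p * P ^ (-p) := e3
          _ = _ := by rw [e4]
      calc w a m = ENNReal.ofReal (knorm m ^ (-a)) := rfl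
        _ ≤ ENNReal.ofReal ((8:ℝ) ^ p * ((1 + |(m 0:ℝ)|) ^ (-p) *
            ((1 + |(m 1:ℝ)|) ^ (-p) * (1 + |(m 2:ℝ)|) ^ (-p)))) :=
          ENNReal.ofReal_le_ofReal hmain
        _ = ENNReal.ofReal ((8:ℝ) ^ p) * (g (m 0) * (g (m 1) * g (m 2))) := by
          rw [ENNReal.ofReal_mul (by positivity), ENNReal.ofReal_mul (by positivity),
            ENNReal.ofReal_mul (by positivity)]
  have hle : S a ≤ ENNReal.ofReal ((8:ℝ) ^ p) *
      ((∑' z : ℤ, g z) * ((∑' z : ℤ, g z) * (∑' z : ℤ, g z))) := by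
    calc S a ≤ ∑' m : L, ENNReal.ofReal ((8:ℝ) ^ p) * (g (m 0) * (g (m 1) * g (m 2))) :=
        ENNReal.tsum_le_tsum key
      _ = ENNReal.ofReal ((8:ℝ) ^ p) *
          ((∑' z : ℤ, g z) * ((∑' z : ℤ, g z) * (∑' z : ℤ, g z))) := by
          rw [ENNReal.tsum_mul_left, tsum_coords]
  refine ne_top_of_le_ne_top ?_ hle
  apply ENNReal.mul_ne_top ENNReal.ofReal_ne_top
  have h := sum1d hp1
  exact ENNReal.mul_ne_top h (ENNReal.mul_ne_top h h)

end ICB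

namespace ICB

lemma exp_integral (c d a b : ℝ) (hc : c ≠ 0) :
    ∫ x in a..b, Real.exp (c*x + d) = (Real.exp (c*b+d) - Real.exp (c*a+d))/c := by
  have h : ∀ x : ℝ, HasDerivAt (fun y => Real.exp (c*y+d)/c) (Real.exp (c*x+d)) x := by
    intro x
    have h1 : HasDerivAt (fun y : ℝ => c*y+d) c x := by
      simpa using ((hasDerivAt_id x).const_mul c).add_const d
    have h2 := h1.exp
    have h3 := h2.div_const c
    simpa [mul_div_assoc, mul_div_cancel_right₀ _ hc] using h3
  rw [intervalIntegral.integral_eq_sub_of_hasDerivAt (fun x _ => h x)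
    ((Real.continuous_exp.comp (by continuity)).intervalIntegrable a b)]
  ring

lemma h1 (A B t s : ℝ) (hAB : 0 < A + B) :
    (∫ σ in (0:ℝ)..s, Real.exp (-A * (s - σ) - B * ((t - s) + (t - σ))))
      = (Real.exp ((A+B)*s + (B*s - A*s - 2*B*t))
        - Real.exp ((A+B)*0 + (B*s - A*s - 2*B*t)))/(A+B) := by
  rw [← exp_integral (A+B) (B*s - A*s - 2*B*t) 0 s hAB.ne']
  apply intervalIntegral.integral_congr
  intro σ _
  show Real.exp (-A * (s - σ) - B * ((t - s) + (t - σ)))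
      = Real.exp ((A+B)*σ + (B*s - A*s - 2*B*t))
  exact congrArg Real.exp (by ring)

lemma double_int_le (A B t : ℝ) (hA : 0 < A) (hB : 0 < B) (ht : 0 ≤ t) :
    (∫ s in (0:ℝ)..t, ∫ σ in (0:ℝ)..s,
        Real.exp (-A * (s - σ) - B * ((t - s) + (t - σ)))) ≤ 1 / ((A+B)*B) := by
  have hAB : 0 < A + B := by linarith
  have hcongr : (∫ s in (0:ℝ)..t, ∫ σ in (0:ℝ)..s,
      Real.exp (-A * (s - σ) - B * ((t - s) + (t - σ))))
      = ∫ s in (0:ℝ)..t, (Real.exp ((A+B)*s + (B*s - A*s - 2*B*t))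
          - Real.exp ((A+B)*0 + (B*s - A*s - 2*B*t)))/(A+B) :=
    intervalIntegral.integral_congr (fun s _ => h1 A B t s hAB)
  rw [hcongr]
  have hmono : (∫ s in (0:ℝ)..t, (Real.exp ((A+B)*s + (B*s - A*s - 2*B*t))
          - Real.exp ((A+B)*0 + (B*s - A*s - 2*B*t)))/(A+B))
      ≤ ∫ s in (0:ℝ)..t, Real.exp (2*B*s + (-(2*B)*t))/(A+B) := by
    apply intervalIntegral.integral_mono_on ht
    · apply Continuous.intervalIntegrable; fun_prop
    · apply Continuous.intervalIntegrable; fun_prop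
    · intro s _
      have e1 : Real.exp ((A+B)*s + (B*s - A*s - 2*B*t)) = Real.exp (2*B*s + (-(2*B)*t)) :=
        congrArg Real.exp (by ring)
      have e2 := (Real.exp_pos ((A+B)*0 + (B*s - A*s - 2*B*t))).le
      rw [e1]
      gcongr
      linarith
  refine hmono.trans ?_
  have hne : (2*B : ℝ) ≠ 0 := by positivity
  calc (∫ s in (0:ℝ)..t, Real.exp (2*B*s + (-(2*B)*t))/(A+B))
      = (∫ s in (0:ℝ)..t, Real.exp (2*B*s + (-(2*B)*t)))/(A+B) :=
        intervalIntegral.integral_div _ _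
    _ = ((Real.exp (2*B*t + (-(2*B)*t)) - Real.exp (2*B*0 + (-(2*B)*t)))/(2*B))/(A+B) := by
        rw [exp_integral (2*B) (-(2*B)*t) 0 t hne]
    _ ≤ (1/(2*B))/(A+B) := by
        have h2 : Real.exp (2*B*t + (-(2*B)*t)) - Real.exp (2*B*0 + (-(2*B)*t)) ≤ 1 := by
          rw [show 2*B*t + (-(2*B)*t) = 0 by ring, Real.exp_zero]
          linarith [(Real.exp_pos (2*B*0 + (-(2*B)*t))).le]
        gcongr
    _ ≤ 1/((A+B)*B) := by
        rw [div_div]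
        apply one_div_le_one_div_of_le
        · positivity
        · nlinarith

lemma conv_point {ρ N X Y : ℝ} (hρ : 0 < ρ) (hρ' : ρ ≤ 1/4) (hN : 0 < N)
    (hX : 0 < X) (hY : 0 < Y) (htri : N ≤ X + Y) :
    X ^ (-(2:ℝ)) * Y ^ (-(2:ℝ)) ≤ 2 * N ^ (-(1-ρ)) * (X ^ (-(3+ρ)) + Y ^ (-(3+ρ))) := by
  have h2 : 0 < N/2 := by linarith
  have hhalf : (N/2) ^ (-(1-ρ)) ≤ 2 * N ^ (-(1-ρ)) := half_rpow hN (by linarith) (by linarith)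
  have key1 : ∀ U V : ℝ, 0 < U → 0 < V → U ≤ N/2 → N/2 ≤ V →
      U ^ (-(2:ℝ)) * V ^ (-(2:ℝ)) ≤ (N/2) ^ (-(1-ρ)) * (U ^ (-(3+ρ)) + V ^ (-(3+ρ))) := by
    intro U V hU hV hUle hVge
    have b1 : U ^ (-(2:ℝ)) ≤ (N/2) ^ ((3+ρ) - 2) * U ^ (-(3+ρ)) :=
      rpow_bulk hU hUle (by linarith)
    have b2 : V ^ (-(2:ℝ)) ≤ (N/2) ^ (-(2:ℝ)) :=
      Real.rpow_le_rpow_of_nonpos h2 hVge (by norm_num)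
    have comb : (N/2) ^ ((3+ρ) - 2) * (N/2) ^ (-(2:ℝ)) = (N/2) ^ (-(1-ρ)) := by
      rw [← Real.rpow_add h2]; congr 1; ring
    calc U ^ (-(2:ℝ)) * V ^ (-(2:ℝ))
        ≤ ((N/2) ^ ((3+ρ) - 2) * U ^ (-(3+ρ))) * (N/2) ^ (-(2:ℝ)) :=
          mul_le_mul b1 b2 (Real.rpow_nonneg hV.le _) (by positivity)
      _ = ((N/2) ^ ((3+ρ) - 2) * (N/2) ^ (-(2:ℝ))) * U ^ (-(3+ρ)) := by ring
      _ = (N/2) ^ (-(1-ρ)) * U ^ (-(3+ρ)) := by rw [comb]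
      _ ≤ (N/2) ^ (-(1-ρ)) * (U ^ (-(3+ρ)) + V ^ (-(3+ρ))) :=
          mul_le_mul_of_nonneg_left (le_add_of_nonneg_right (Real.rpow_nonneg hV.le _))
            (Real.rpow_nonneg h2.le _)
  have key : X ^ (-(2:ℝ)) * Y ^ (-(2:ℝ)) ≤ (N/2) ^ (-(1-ρ)) * (X ^ (-(3+ρ)) + Y ^ (-(3+ρ))) := by
    rcases le_or_gt X (N/2) with hx | hx
    · exact key1 X Y hX hY hx (by linarith)
    · rcases le_or_gt Y (N/2) with hy | hy
      · have := key1 Y X hY hX hy hx.le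
        calc X ^ (-(2:ℝ)) * Y ^ (-(2:ℝ)) = Y ^ (-(2:ℝ)) * X ^ (-(2:ℝ)) := mul_comm _ _
          _ ≤ (N/2) ^ (-(1-ρ)) * (Y ^ (-(3+ρ)) + X ^ (-(3+ρ))) := this
          _ = (N/2) ^ (-(1-ρ)) * (X ^ (-(3+ρ)) + Y ^ (-(3+ρ))) := by ring
      · -- both large
        have am : X ^ (-(2:ℝ)) * Y ^ (-(2:ℝ)) ≤ (X ^ (-(4:ℝ)) + Y ^ (-(4:ℝ)))/2 := by
          have e1 : (X ^ (-(2:ℝ)))^(2:ℕ) = X ^ (-(4:ℝ)) := by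
            rw [← Real.rpow_natCast (X ^ (-(2:ℝ))) 2, ← Real.rpow_mul hX.le]
            norm_num
          have e2 : (Y ^ (-(2:ℝ)))^(2:ℕ) = Y ^ (-(4:ℝ)) := by
            rw [← Real.rpow_natCast (Y ^ (-(2:ℝ))) 2, ← Real.rpow_mul hY.le]
            norm_num
          nlinarith [sq_nonneg (X ^ (-(2:ℝ)) - Y ^ (-(2:ℝ)))]
        have t1 : X ^ (-(4:ℝ)) ≤ (N/2) ^ (-(1-ρ)) * X ^ (-(3+ρ)) := by
          have h := rpow_tail h2 hx.le (show (3+ρ) ≤ (4:ℝ) by linarith)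
          rw [show (3+ρ) - (4:ℝ) = -(1-ρ) by ring] at h; exact h
        have t2 : Y ^ (-(4:ℝ)) ≤ (N/2) ^ (-(1-ρ)) * Y ^ (-(3+ρ)) := by
          have h := rpow_tail h2 hy.le (show (3+ρ) ≤ (4:ℝ) by linarith)
          rw [show (3+ρ) - (4:ℝ) = -(1-ρ) by ring] at h; exact h
        have hpos : 0 ≤ (N/2) ^ (-(1-ρ)) * (X ^ (-(3+ρ)) + Y ^ (-(3+ρ))) := by positivity
        linarith
  calc X ^ (-(2:ℝ)) * Y ^ (-(2:ℝ)) ≤ (N/2) ^ (-(1-ρ)) * (X ^ (-(3+ρ)) + Y ^ (-(3+ρ))) := key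
    _ ≤ (2 * N ^ (-(1-ρ))) * (X ^ (-(3+ρ)) + Y ^ (-(3+ρ))) :=
        mul_le_mul_of_nonneg_right hhalf (by positivity)
    _ = 2 * N ^ (-(1-ρ)) * (X ^ (-(3+ρ)) + Y ^ (-(3+ρ))) := by ring

lemma conv_point2 {ρ N X Y : ℝ} (hρ : 0 < ρ) (hρ' : ρ ≤ 1/4) (hN : 1 ≤ N)
    (hX : 0 < X) (hY : 0 < Y) (htri : N ≤ X + Y) :
    X ^ (-(3+2*ρ)) * Y ^ (-(1-ρ)) ≤ 2 * N ^ (-(1-ρ)) * (X ^ (-(3+2*ρ)) + Y ^ (-(3+ρ))) := by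
  have hN0 : 0 < N := by linarith
  have h2 : 0 < N/2 := by linarith
  rcases le_or_gt (N/2) Y with hy | hy
  · -- Y big
    have b1 : Y ^ (-(1-ρ)) ≤ (N/2) ^ (-(1-ρ)) :=
      Real.rpow_le_rpow_of_nonpos h2 hy (by linarith)
    have hhalf : (N/2) ^ (-(1-ρ)) ≤ 2 * N ^ (-(1-ρ)) := half_rpow hN0 (by linarith) (by linarith)
    calc X ^ (-(3+2*ρ)) * Y ^ (-(1-ρ)) ≤ X ^ (-(3+2*ρ)) * (2 * N ^ (-(1-ρ))) :=
          mul_le_mul_of_nonneg_left (b1.trans hhalf) (Real.rpow_nonneg hX.le _)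
      _ = 2 * N ^ (-(1-ρ)) * X ^ (-(3+2*ρ)) := by ring
      _ ≤ 2 * N ^ (-(1-ρ)) * (X ^ (-(3+2*ρ)) + Y ^ (-(3+ρ))) :=
          mul_le_mul_of_nonneg_left (le_add_of_nonneg_right (Real.rpow_nonneg hY.le _))
            (by positivity)
  · -- X big
    have hx : N/2 ≤ X := by linarith
    have b1 : X ^ (-(3+2*ρ)) ≤ (N/2) ^ (-(3+2*ρ)) :=
      Real.rpow_le_rpow_of_nonpos h2 hx (by linarith)
    have b2 : Y ^ (-(1-ρ)) ≤ (N/2) ^ ((3+ρ) - (1-ρ)) * Y ^ (-(3+ρ)) :=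
      rpow_bulk hY hy.le (by linarith)
    have comb : (N/2) ^ (-(3+2*ρ)) * (N/2) ^ ((3+ρ) - (1-ρ)) = (N/2) ^ (-(1:ℝ)) := by
      rw [← Real.rpow_add h2]; congr 1; ring
    have hone : (N/2) ^ (-(1:ℝ)) ≤ 2 * N ^ (-(1:ℝ)) := half_rpow hN0 (by norm_num) (by norm_num)
    have hexp : N ^ (-(1:ℝ)) ≤ N ^ (-(1-ρ)) :=
      Real.rpow_le_rpow_of_exponent_le hN (by linarith)
    calc X ^ (-(3+2*ρ)) * Y ^ (-(1-ρ))
        ≤ (N/2) ^ (-(3+2*ρ)) * ((N/2) ^ ((3+ρ) - (1-ρ)) * Y ^ (-(3+ρ))) :=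
          mul_le_mul b1 b2 (Real.rpow_nonneg hY.le _) (Real.rpow_nonneg h2.le _)
      _ = ((N/2) ^ (-(3+2*ρ)) * (N/2) ^ ((3+ρ) - (1-ρ))) * Y ^ (-(3+ρ)) := by ring
      _ = (N/2) ^ (-(1:ℝ)) * Y ^ (-(3+ρ)) := by rw [comb]
      _ ≤ (2 * N ^ (-(1-ρ))) * Y ^ (-(3+ρ)) := by
          apply mul_le_mul_of_nonneg_right _ (Real.rpow_nonneg hY.le _)
          calc (N/2) ^ (-(1:ℝ)) ≤ 2 * N ^ (-(1:ℝ)) := hone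
            _ ≤ 2 * N ^ (-(1-ρ)) := by linarith
      _ = 2 * N ^ (-(1-ρ)) * Y ^ (-(3+ρ)) := by ring
      _ ≤ 2 * N ^ (-(1-ρ)) * (X ^ (-(3+2*ρ)) + Y ^ (-(3+ρ))) :=
          mul_le_mul_of_nonneg_left (le_add_of_nonneg_left (Real.rpow_nonneg hX.le _))
            (by positivity)

lemma w_sq (m : L) : w 2 m * w 2 m = w 4 m := by
  by_cases hm : m = 0
  · subst hm; rw [w_zero (by norm_num), w_zero (by norm_num)]; simp
  · have hK : 0 < knorm m := knorm_pos hm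
    unfold w
    rw [← ENNReal.ofReal_mul (Real.rpow_nonneg hK.le _), ← Real.rpow_add hK]
    norm_num

lemma w_le_w {a b : ℝ} (hab : b ≤ a) {m : L} (hm : m ≠ 0) : w a m ≤ w b m :=
  ENNReal.ofReal_le_ofReal
    (Real.rpow_le_rpow_of_exponent_le (one_le_knorm hm) (by linarith))

lemma tsum_shift (a : ℝ) (n : L) : (∑' m : L, w a (n - m)) = S a := by
  have h := Equiv.tsum_eq (Equiv.subLeft n) (w a)
  simpa [Equiv.subLeft_apply, S] using h

/-- the inner convolution sum bound -/
lemma F_le {ρ : ℝ} (hρ : 0 < ρ) (hρ' : ρ ≤ 1/4) (n : L) :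
    (∑' m : L, w 2 m * w 2 (n - m))
      ≤ ENNReal.ofReal (2 * knorm n ^ (-(1-ρ))) * (2 * S (3+ρ))
        + (if n = 0 then S (4:ℝ) else 0) := by
  by_cases hn : n = 0
  · rw [if_pos hn, hn]
    have heq : ∀ m : L, w 2 ((0:L) - m) = w 2 m := by
      intro m; rw [zero_sub]
      unfold w; rw [knorm_neg]
    have : (∑' m : L, w 2 m * w 2 ((0:L) - m)) = S (4:ℝ) := by
      apply tsum_congr; intro m
      rw [heq m, w_sq]
    rw [this]
    exact le_add_self
  · rw [if_neg hn, add_zero]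
    have hN : 0 < knorm n := knorm_pos hn
    have hterm : ∀ m : L, w 2 m * w 2 (n - m)
        ≤ ENNReal.ofReal (2 * knorm n ^ (-(1-ρ))) * (w (3+ρ) m + w (3+ρ) (n - m)) := by
      intro m
      by_cases hm : m = 0
      · subst hm; rw [w_zero (by norm_num), zero_mul]; exact zero_le
      by_cases hnm : n - m = 0
      · rw [hnm, w_zero (by norm_num), mul_zero]; exact zero_le
      have hX : 0 < knorm m := knorm_pos hm
      have hY : 0 < knorm (n - m) := knorm_pos hnm
      have htri : knorm n ≤ knorm m + knorm (n - m) := by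
        have := knorm_triangle m (n - m)
        rwa [show m + (n - m) = n from by abel] at this
      have hreal := conv_point hρ hρ' hN hX hY htri
      calc w 2 m * w 2 (n - m)
          = ENNReal.ofReal (knorm m ^ (-(2:ℝ)) * knorm (n - m) ^ (-(2:ℝ))) := by
            unfold w; rw [ENNReal.ofReal_mul (Real.rpow_nonneg hX.le _)]
        _ ≤ ENNReal.ofReal (2 * knorm n ^ (-(1-ρ))
              * (knorm m ^ (-(3+ρ)) + knorm (n - m) ^ (-(3+ρ)))) :=
            ENNReal.ofReal_le_ofReal hreal
        _ = ENNReal.ofReal (2 * knorm n ^ (-(1-ρ))) * (w (3+ρ) m + w (3+ρ) (n - m)) := by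
            unfold w
            rw [ENNReal.ofReal_mul (by positivity),
              ENNReal.ofReal_add (Real.rpow_nonneg hX.le _) (Real.rpow_nonneg hY.le _)]
    calc (∑' m : L, w 2 m * w 2 (n - m))
        ≤ ∑' m : L, ENNReal.ofReal (2 * knorm n ^ (-(1-ρ))) * (w (3+ρ) m + w (3+ρ) (n - m)) :=
          ENNReal.tsum_le_tsum hterm
      _ = ENNReal.ofReal (2 * knorm n ^ (-(1-ρ)))
            * ((∑' m : L, w (3+ρ) m) + ∑' m : L, w (3+ρ) (n - m)) := by
          rw [ENNReal.tsum_mul_left, ENNReal.tsum_add]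
      _ = ENNReal.ofReal (2 * knorm n ^ (-(1-ρ))) * (2 * S (3+ρ)) := by
          rw [tsum_shift (3+ρ) n]
          show ENNReal.ofReal (2 * knorm n ^ (-(1-ρ))) * (S (3+ρ) + S (3+ρ)) = _
          congr 1; exact (two_mul _).symm

/-- total constant -/
def E (ρ : ℝ) : ℝ≥0∞ := 4 * (S (3+2*ρ) + S (3+ρ)) * (2 * S (3+ρ)) + S (4:ℝ)

lemma E_ne_top {ρ : ℝ} (hρ : 0 < ρ) : E ρ ≠ ∞ := by
  have h1 := Sfin (show (3:ℝ) < 3+2*ρ by linarith)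
  have h2 := Sfin (show (3:ℝ) < 3+ρ by linarith)
  have h4 := Sfin (show (3:ℝ) < 4 by norm_num)
  unfold E
  apply ENNReal.add_ne_top.mpr
  constructor
  · apply ENNReal.mul_ne_top
    · apply ENNReal.mul_ne_top
      · exact ENNReal.ofNat_ne_top
      · exact ENNReal.add_ne_top.mpr ⟨h1, h2⟩
    · exact ENNReal.mul_ne_top ENNReal.ofNat_ne_top h2
  · exact h4

lemma H_le {ρ : ℝ} (hρ : 0 < ρ) (hρ' : ρ ≤ 1/4) {k : L} (hk : k ≠ 0) :
    (∑' k₁ : L, w (3+2*ρ) k₁ * (∑' m : L, w 2 m * w 2 ((k - k₁) - m)))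
      ≤ ENNReal.ofReal (knorm k ^ (-(1-ρ))) * E ρ := by
  have hN1 : 1 ≤ knorm k := one_le_knorm hk
  have hN : 0 < knorm k := by linarith
  -- first: apply F_le inside
  have step1 : ∀ k₁ : L, w (3+2*ρ) k₁ * (∑' m : L, w 2 m * w 2 ((k - k₁) - m))
      ≤ w (3+2*ρ) k₁ * (ENNReal.ofReal (2 * knorm (k - k₁) ^ (-(1-ρ))) * (2 * S (3+ρ)))
        + (if k₁ = k then w (3+2*ρ) k * S (4:ℝ) else 0) := by
    intro k₁
    have hF := F_le hρ hρ' (k - k₁)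
    by_cases hkk : k₁ = k
    · rw [if_pos hkk, hkk, sub_self]
      have hF0 := F_le hρ hρ' (0 : L)
      rw [if_pos rfl] at hF0
      calc w (3+2*ρ) k * (∑' m : L, w 2 m * w 2 ((0:L) - m))
          ≤ w (3+2*ρ) k * (ENNReal.ofReal (2 * knorm (0:L) ^ (-(1-ρ))) * (2 * S (3+ρ))
              + S (4:ℝ)) := mul_le_mul_right hF0 _
        _ = _ := by rw [mul_add]
    · rw [if_neg hkk, add_zero]
      rw [if_neg (fun h => hkk (by rwa [sub_eq_zero, eq_comm] at h)), add_zero] at hF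
      exact mul_le_mul_right hF _
  calc (∑' k₁ : L, w (3+2*ρ) k₁ * (∑' m : L, w 2 m * w 2 ((k - k₁) - m)))
      ≤ ∑' k₁ : L, (w (3+2*ρ) k₁ * (ENNReal.ofReal (2 * knorm (k - k₁) ^ (-(1-ρ)))
            * (2 * S (3+ρ)))
          + (if k₁ = k then w (3+2*ρ) k * S (4:ℝ) else 0)) := ENNReal.tsum_le_tsum step1
    _ = (∑' k₁ : L, w (3+2*ρ) k₁ * ENNReal.ofReal (2 * knorm (k - k₁) ^ (-(1-ρ)))
            * (2 * S (3+ρ)))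
          + ∑' k₁ : L, (if k₁ = k then w (3+2*ρ) k * S (4:ℝ) else 0) := by
        rw [← ENNReal.tsum_add]
        apply tsum_congr; intro k₁
        rw [mul_assoc]
    _ ≤ ENNReal.ofReal (knorm k ^ (-(1-ρ))) * E ρ := by
        -- second summand
        have hsingle : (∑' k₁ : L, (if k₁ = k then w (3+2*ρ) k * S (4:ℝ) else 0))
            = w (3+2*ρ) k * S (4:ℝ) := by
          rw [tsum_eq_single k]
          · rw [if_pos rfl]
          · intro b hb; rw [if_neg hb]
        rw [hsingle]
        -- first summand termwise bound
        have hterm : ∀ k₁ : L, w (3+2*ρ) k₁ * ENNReal.ofReal (2 * knorm (k - k₁) ^ (-(1-ρ)))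
            ≤ ENNReal.ofReal (4 * knorm k ^ (-(1-ρ)))
              * (w (3+2*ρ) k₁ + w (3+ρ) (k - k₁)) := by
          intro k₁
          by_cases hk₁ : k₁ = 0
          · subst hk₁; rw [w_zero (by positivity), zero_mul]; exact zero_le
          by_cases hkk : k - k₁ = 0
          · rw [hkk]
            have h0 : knorm (0 : L) = 0 := by unfold knorm; simp
            rw [h0, Real.zero_rpow (by intro h; rw [neg_eq_zero] at h; linarith), mul_zero,
              ENNReal.ofReal_zero, mul_zero]
            exact zero_le
          have hX : 0 < knorm k₁ := knorm_pos hk₁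
          have hY : 0 < knorm (k - k₁) := knorm_pos hkk
          have htri : knorm k ≤ knorm k₁ + knorm (k - k₁) := by
            have := knorm_triangle k₁ (k - k₁)
            rwa [show k₁ + (k - k₁) = k from by abel] at this
          have hreal := conv_point2 hρ hρ' hN1 hX hY htri
          calc w (3+2*ρ) k₁ * ENNReal.ofReal (2 * knorm (k - k₁) ^ (-(1-ρ)))
              = ENNReal.ofReal (2 * (knorm k₁ ^ (-(3+2*ρ)) * knorm (k - k₁) ^ (-(1-ρ)))) := by
                unfold w
                rw [← ENNReal.ofReal_mul (Real.rpow_nonneg hX.le _)]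
                congr 1; ring
            _ ≤ ENNReal.ofReal (2 * (2 * knorm k ^ (-(1-ρ))
                  * (knorm k₁ ^ (-(3+2*ρ)) + knorm (k - k₁) ^ (-(3+ρ))))) := by
                apply ENNReal.ofReal_le_ofReal
                have h2 : (0:ℝ) ≤ 2 := by norm_num
                nlinarith [hreal, Real.rpow_nonneg hX.le (-(3+2*ρ)),
                  Real.rpow_nonneg hY.le (-(3+ρ)), Real.rpow_nonneg hN.le (-(1-ρ))]
            _ = ENNReal.ofReal (4 * knorm k ^ (-(1-ρ)))
                  * (w (3+2*ρ) k₁ + w (3+ρ) (k - k₁)) := by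
                unfold w
                rw [← ENNReal.ofReal_add (Real.rpow_nonneg hX.le _) (Real.rpow_nonneg hY.le _),
                  ← ENNReal.ofReal_mul (by positivity)]
                congr 1; ring
        have hsum1 : (∑' k₁ : L, w (3+2*ρ) k₁ * ENNReal.ofReal (2 * knorm (k - k₁) ^ (-(1-ρ))))
            ≤ ENNReal.ofReal (4 * knorm k ^ (-(1-ρ))) * (S (3+2*ρ) + S (3+ρ)) := by
          calc (∑' k₁ : L, w (3+2*ρ) k₁ * ENNReal.ofReal (2 * knorm (k - k₁) ^ (-(1-ρ))))
              ≤ ∑' k₁ : L, ENNReal.ofReal (4 * knorm k ^ (-(1-ρ)))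
                  * (w (3+2*ρ) k₁ + w (3+ρ) (k - k₁)) := ENNReal.tsum_le_tsum hterm
            _ = ENNReal.ofReal (4 * knorm k ^ (-(1-ρ)))
                  * ((∑' k₁ : L, w (3+2*ρ) k₁) + ∑' k₁ : L, w (3+ρ) (k - k₁)) := by
                rw [ENNReal.tsum_mul_left, ENNReal.tsum_add]
            _ = ENNReal.ofReal (4 * knorm k ^ (-(1-ρ))) * (S (3+2*ρ) + S (3+ρ)) := by
                rw [tsum_shift (3+ρ) k]
                rfl
        -- assemble
        have hwk : w (3+2*ρ) k ≤ ENNReal.ofReal (knorm k ^ (-(1-ρ))) :=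
          w_le_w (by linarith) hk
        have h4 : ENNReal.ofReal (4 * knorm k ^ (-(1-ρ)))
            = ENNReal.ofReal (knorm k ^ (-(1-ρ))) * 4 := by
          rw [ENNReal.ofReal_mul (by norm_num)]
          rw [mul_comm]
          congr 1
          norm_num
        calc (∑' k₁ : L, w (3+2*ρ) k₁ * ENNReal.ofReal (2 * knorm (k - k₁) ^ (-(1-ρ)))
                * (2 * S (3+ρ))) + w (3+2*ρ) k * S (4:ℝ)
            ≤ (ENNReal.ofReal (4 * knorm k ^ (-(1-ρ))) * (S (3+2*ρ) + S (3+ρ))) * (2 * S (3+ρ))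
              + ENNReal.ofReal (knorm k ^ (-(1-ρ))) * S (4:ℝ) := by
              apply add_le_add
              · rw [ENNReal.tsum_mul_right]
                exact mul_le_mul_left hsum1 _
              · exact mul_le_mul_left hwk _
          _ = ENNReal.ofReal (knorm k ^ (-(1-ρ))) * E ρ := by
              rw [h4]
              unfold E
              ring

lemma inv_sq_rpow {x : ℝ} (hx : 0 ≤ x) : (x^2)⁻¹ = x^(-(2:ℝ)) := by
  rw [Real.rpow_neg hx, Real.rpow_two]

lemma term_le {ρ : ℝ} (hρ : 0 < ρ) (hρ' : ρ ≤ 1/4) (k k₁ k₂ : L)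
    (hk : k ≠ 0) (hk₁ : k₁ ≠ 0) (hk₂ : k₂ ≠ 0) (t : ℝ) (ht : 0 ≤ t) :
    (if k - k₁ - k₂ ≠ 0 then
      ENNReal.ofReal ((1 / (knorm k₁ ^ 2 * knorm k₂ ^ 2 * knorm (k - k₁ - k₂) ^ 2)) *
        ∫ s in (0:ℝ)..t, ∫ σ in (0:ℝ)..s,
          Real.exp (-(knorm k₁ ^ 2 + knorm k₂ ^ 2 + knorm (k - k₁ - k₂) ^ 2) * (s - σ)
            - knorm k ^ 2 * ((t - s) + (t - σ))))
    else 0)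
    ≤ ENNReal.ofReal (knorm k ^ (-(3-2*ρ)))
        * (w (3+2*ρ) k₁ * (w 2 k₂ * w 2 (k - k₁ - k₂))) := by
  by_cases h3 : k - k₁ - k₂ ≠ 0
  swap
  · rw [if_neg h3]; exact zero_le
  rw [if_pos h3]
  have hx₁ : 1 ≤ knorm k₁ := one_le_knorm hk₁
  have hx₂ : 1 ≤ knorm k₂ := one_le_knorm hk₂
  have hx₃ : 1 ≤ knorm (k - k₁ - k₂) := one_le_knorm h3
  have hN1 : 1 ≤ knorm k := one_le_knorm hk
  have hx₁0 : (0:ℝ) < knorm k₁ := by linarith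
  have hx₂0 : (0:ℝ) < knorm k₂ := by linarith
  have hx₃0 : (0:ℝ) < knorm (k - k₁ - k₂) := by linarith
  have hN0 : (0:ℝ) < knorm k := by linarith
  set x₁ := knorm k₁
  set x₂ := knorm k₂
  set x₃ := knorm (k - k₁ - k₂)
  set N := knorm k
  have hA : (0:ℝ) < x₁^2 + x₂^2 + x₃^2 := by positivity
  have hB : (0:ℝ) < N^2 := by positivity
  have hJ := double_int_le (x₁^2 + x₂^2 + x₃^2) (N^2) t hA hB ht
  have hAB : (0:ℝ) < (x₁^2 + x₂^2 + x₃^2) + N^2 := by positivity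
  -- core splitting inequality
  have core : ((x₁^2 + x₂^2 + x₃^2) + N^2)⁻¹ ≤ x₁^(-(1+2*ρ)) * N^(-(1-2*ρ)) := by
    have e : ((x₁^2 + x₂^2 + x₃^2) + N^2)⁻¹
        = ((x₁^2 + x₂^2 + x₃^2) + N^2)^(-((1+2*ρ)/2))
          * ((x₁^2 + x₂^2 + x₃^2) + N^2)^(-((1-2*ρ)/2)) := by
      rw [← Real.rpow_add hAB, ← Real.rpow_neg_one]
      congr 1; ring
    have p1 : ((x₁^2 + x₂^2 + x₃^2) + N^2)^(-((1+2*ρ)/2)) ≤ (x₁^2)^(-((1+2*ρ)/2)) := by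
      apply Real.rpow_le_rpow_of_nonpos (by positivity) (by nlinarith) (by linarith)
    have p2 : ((x₁^2 + x₂^2 + x₃^2) + N^2)^(-((1-2*ρ)/2)) ≤ (N^2)^(-((1-2*ρ)/2)) := by
      apply Real.rpow_le_rpow_of_nonpos (by positivity) (by nlinarith) (by linarith)
    have q1 : (x₁^2)^(-((1+2*ρ)/2)) = x₁^(-(1+2*ρ)) := by
      rw [← Real.rpow_natCast x₁ 2, ← Real.rpow_mul hx₁0.le]
      congr 1; push_cast; ring
    have q2 : (N^2)^(-((1-2*ρ)/2)) = N^(-(1-2*ρ)) := by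
      rw [← Real.rpow_natCast N 2, ← Real.rpow_mul hN0.le]
      congr 1; push_cast; ring
    calc ((x₁^2 + x₂^2 + x₃^2) + N^2)⁻¹
        = _ * _ := e
      _ ≤ (x₁^2)^(-((1+2*ρ)/2)) * (N^2)^(-((1-2*ρ)/2)) :=
          mul_le_mul p1 p2 (Real.rpow_nonneg hAB.le _) (Real.rpow_nonneg (by positivity) _)
      _ = x₁^(-(1+2*ρ)) * N^(-(1-2*ρ)) := by rw [q1, q2]
  -- real chain
  have hreal : (1 / (x₁ ^ 2 * x₂ ^ 2 * x₃ ^ 2)) *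
      (∫ s in (0:ℝ)..t, ∫ σ in (0:ℝ)..s,
        Real.exp (-(x₁ ^ 2 + x₂ ^ 2 + x₃ ^ 2) * (s - σ) - N ^ 2 * ((t - s) + (t - σ))))
      ≤ N^(-(3-2*ρ)) * (x₁^(-(3+2*ρ)) * (x₂^(-(2:ℝ)) * x₃^(-(2:ℝ)))) := by
    have step1 : (1 / (x₁ ^ 2 * x₂ ^ 2 * x₃ ^ 2)) *
        (∫ s in (0:ℝ)..t, ∫ σ in (0:ℝ)..s,
          Real.exp (-(x₁ ^ 2 + x₂ ^ 2 + x₃ ^ 2) * (s - σ) - N ^ 2 * ((t - s) + (t - σ))))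
        ≤ (1 / (x₁ ^ 2 * x₂ ^ 2 * x₃ ^ 2)) * (1 / (((x₁^2 + x₂^2 + x₃^2) + N^2) * N^2)) :=
      mul_le_mul_of_nonneg_left hJ (by positivity)
    refine step1.trans ?_
    have lhs_eq : (1 / (x₁ ^ 2 * x₂ ^ 2 * x₃ ^ 2)) * (1 / (((x₁^2 + x₂^2 + x₃^2) + N^2) * N^2))
        = ((x₁^2)⁻¹ * ((x₂^2)⁻¹ * (x₃^2)⁻¹) * (N^2)⁻¹) * ((x₁^2 + x₂^2 + x₃^2) + N^2)⁻¹ := by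
      rw [one_div, one_div, mul_inv, mul_inv, mul_inv]
      ring
    have rhs_eq : N^(-(3-2*ρ)) * (x₁^(-(3+2*ρ)) * (x₂^(-(2:ℝ)) * x₃^(-(2:ℝ))))
        = ((x₁^2)⁻¹ * ((x₂^2)⁻¹ * (x₃^2)⁻¹) * (N^2)⁻¹) * (x₁^(-(1+2*ρ)) * N^(-(1-2*ρ))) := by
      have d1 : N^(-(3-2*ρ)) = (N^2)⁻¹ * N^(-(1-2*ρ)) := by
        rw [inv_sq_rpow hN0.le, ← Real.rpow_add hN0]
        congr 1; ring
      have d2 : x₁^(-(3+2*ρ)) = (x₁^2)⁻¹ * x₁^(-(1+2*ρ)) := by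
        rw [inv_sq_rpow hx₁0.le, ← Real.rpow_add hx₁0]
        congr 1; ring
      rw [d1, d2, inv_sq_rpow hx₂0.le, inv_sq_rpow hx₃0.le]
      ring
    rw [lhs_eq, rhs_eq]
    exact mul_le_mul_of_nonneg_left core (by positivity)
  -- pass to ENNReal
  calc ENNReal.ofReal ((1 / (x₁ ^ 2 * x₂ ^ 2 * x₃ ^ 2)) *
        ∫ s in (0:ℝ)..t, ∫ σ in (0:ℝ)..s,
          Real.exp (-(x₁ ^ 2 + x₂ ^ 2 + x₃ ^ 2) * (s - σ) - N ^ 2 * ((t - s) + (t - σ))))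
      ≤ ENNReal.ofReal (N^(-(3-2*ρ)) * (x₁^(-(3+2*ρ)) * (x₂^(-(2:ℝ)) * x₃^(-(2:ℝ))))) :=
        ENNReal.ofReal_le_ofReal hreal
    _ = ENNReal.ofReal (N ^ (-(3-2*ρ))) * (w (3+2*ρ) k₁ * (w 2 k₂ * w 2 (k - k₁ - k₂))) := by
        unfold w
        rw [ENNReal.ofReal_mul (Real.rpow_nonneg hN0.le _),
          ENNReal.ofReal_mul (Real.rpow_nonneg hx₁0.le _),
          ENNReal.ofReal_mul (Real.rpow_nonneg hx₂0.le _)]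

end ICB

/-- Lattice/integral bound for the integrated renormalized cube:
for small `ρ > 0` and `T > 0`, the kernel sum is bounded by `C |k|^{-4+4ρ}`. -/
theorem integrated_cube_bound (T : ℝ) (hT : 0 < T) :
    ∃ ρ₀ : ℝ, 0 < ρ₀ ∧ ∀ ρ : ℝ, 0 < ρ → ρ ≤ ρ₀ →
      ∃ C : ℝ, 0 < C ∧ ∀ k : Fin 3 → ℤ, k ≠ 0 → ∀ t ∈ Set.Icc (0:ℝ) T,
        ∑' p : {m : Fin 3 → ℤ // m ≠ 0} × {m : Fin 3 → ℤ // m ≠ 0},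
          (if k - (p.1 : Fin 3 → ℤ) - (p.2 : Fin 3 → ℤ) ≠ 0 then
            ENNReal.ofReal
              ((1 / (knorm (p.1 : Fin 3 → ℤ) ^ 2 * knorm (p.2 : Fin 3 → ℤ) ^ 2 *
                  knorm (k - (p.1 : Fin 3 → ℤ) - (p.2 : Fin 3 → ℤ)) ^ 2)) *
                ∫ s in (0:ℝ)..t, ∫ σ in (0:ℝ)..s,
                  Real.exp
                    (-(knorm (p.1 : Fin 3 → ℤ) ^ 2 + knorm (p.2 : Fin 3 → ℤ) ^ 2 +
                        knorm (k - (p.1 : Fin 3 → ℤ) - (p.2 : Fin 3 → ℤ)) ^ 2) * (s - σ) -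
                      knorm k ^ 2 * ((t - s) + (t - σ))))
          else 0) ≤
        ENNReal.ofReal (C * knorm k ^ (-(4:ℝ) + 4 * ρ)) := by
  refine ⟨1/4, by norm_num, ?_⟩
  intro ρ hρ hρ'
  have hE := ICB.E_ne_top hρ
  refine ⟨(ICB.E ρ).toReal + 1, by positivity, ?_⟩
  intro k hk t ht
  obtain ⟨ht0, htT⟩ := ht
  have hN1 : 1 ≤ knorm k := ICB.one_le_knorm hk
  have hN0 : (0:ℝ) < knorm k := by linarith
  have hinj : Function.Injective
      (fun p : {m : Fin 3 → ℤ // m ≠ 0} × {m : Fin 3 → ℤ // m ≠ 0} =>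
        ((p.1 : Fin 3 → ℤ), (p.2 : Fin 3 → ℤ))) := by
    intro p q h
    rw [Prod.ext_iff] at h
    exact Prod.ext (Subtype.ext h.1) (Subtype.ext h.2)
  calc ∑' p : {m : Fin 3 → ℤ // m ≠ 0} × {m : Fin 3 → ℤ // m ≠ 0},
        (if k - (p.1 : Fin 3 → ℤ) - (p.2 : Fin 3 → ℤ) ≠ 0 then
          ENNReal.ofReal
            ((1 / (knorm (p.1 : Fin 3 → ℤ) ^ 2 * knorm (p.2 : Fin 3 → ℤ) ^ 2 *
                knorm (k - (p.1 : Fin 3 → ℤ) - (p.2 : Fin 3 → ℤ)) ^ 2)) *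
              ∫ s in (0:ℝ)..t, ∫ σ in (0:ℝ)..s,
                Real.exp
                  (-(knorm (p.1 : Fin 3 → ℤ) ^ 2 + knorm (p.2 : Fin 3 → ℤ) ^ 2 +
                      knorm (k - (p.1 : Fin 3 → ℤ) - (p.2 : Fin 3 → ℤ)) ^ 2) * (s - σ) -
                    knorm k ^ 2 * ((t - s) + (t - σ))))
        else 0)
      ≤ ∑' p : {m : Fin 3 → ℤ // m ≠ 0} × {m : Fin 3 → ℤ // m ≠ 0},
          ENNReal.ofReal (knorm k ^ (-(3-2*ρ)))
            * (ICB.w (3+2*ρ) (p.1 : Fin 3 → ℤ) * (ICB.w 2 (p.2 : Fin 3 → ℤ)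
                * ICB.w 2 (k - (p.1 : Fin 3 → ℤ) - (p.2 : Fin 3 → ℤ)))) :=
        ENNReal.tsum_le_tsum (fun p =>
          ICB.term_le hρ hρ' k (p.1 : Fin 3 → ℤ) (p.2 : Fin 3 → ℤ) hk p.1.2 p.2.2 t ht0)
    _ = ENNReal.ofReal (knorm k ^ (-(3-2*ρ)))
          * ∑' p : {m : Fin 3 → ℤ // m ≠ 0} × {m : Fin 3 → ℤ // m ≠ 0},
            (fun q : (Fin 3 → ℤ) × (Fin 3 → ℤ) =>
              ICB.w (3+2*ρ) q.1 * (ICB.w 2 q.2 * ICB.w 2 (k - q.1 - q.2)))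
              ((p.1 : Fin 3 → ℤ), (p.2 : Fin 3 → ℤ)) := ENNReal.tsum_mul_left
    _ ≤ ENNReal.ofReal (knorm k ^ (-(3-2*ρ)))
          * ∑' q : (Fin 3 → ℤ) × (Fin 3 → ℤ),
              ICB.w (3+2*ρ) q.1 * (ICB.w 2 q.2 * ICB.w 2 (k - q.1 - q.2)) :=
        mul_le_mul_right (ENNReal.tsum_comp_le_tsum_of_injective hinj
          (fun q : (Fin 3 → ℤ) × (Fin 3 → ℤ) =>
            ICB.w (3+2*ρ) q.1 * (ICB.w 2 q.2 * ICB.w 2 (k - q.1 - q.2)))) _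
    _ = ENNReal.ofReal (knorm k ^ (-(3-2*ρ)))
          * ∑' k₁ : Fin 3 → ℤ, ICB.w (3+2*ρ) k₁
              * (∑' m : Fin 3 → ℤ, ICB.w 2 m * ICB.w 2 ((k - k₁) - m)) := by
        congr 1
        rw [ENNReal.tsum_prod']
        apply tsum_congr; intro k₁
        show (∑' m : Fin 3 → ℤ, ICB.w (3+2*ρ) k₁ * (ICB.w 2 m * ICB.w 2 ((k - k₁) - m))) = _
        rw [ENNReal.tsum_mul_left]
    _ ≤ ENNReal.ofReal (knorm k ^ (-(3-2*ρ)))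
          * (ENNReal.ofReal (knorm k ^ (-(1-ρ))) * ICB.E ρ) :=
        mul_le_mul_right (ICB.H_le hρ hρ' hk) _
    _ = ENNReal.ofReal (knorm k ^ (-(4-3*ρ))) * ICB.E ρ := by
        rw [← mul_assoc, ← ENNReal.ofReal_mul (Real.rpow_nonneg hN0.le _),
          ← Real.rpow_add hN0]
        congr 2
        ring
    _ ≤ ENNReal.ofReal (knorm k ^ (-(4:ℝ) + 4 * ρ)) * ICB.E ρ := by
        apply mul_le_mul_left
        apply ENNReal.ofReal_le_ofReal
        exact Real.rpow_le_rpow_of_exponent_le hN1 (by linarith)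
    _ ≤ ENNReal.ofReal (((ICB.E ρ).toReal + 1) * knorm k ^ (-(4:ℝ) + 4 * ρ)) := by
        rw [ENNReal.ofReal_mul (by positivity), mul_comm]
        apply mul_le_mul_left
        calc ICB.E ρ = ENNReal.ofReal (ICB.E ρ).toReal := (ENNReal.ofReal_toReal hE).symm
          _ ≤ ENNReal.ofReal ((ICB.E ρ).toReal + 1) := ENNReal.ofReal_le_ofReal (by linarith)
end
end
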